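/- If T is (A,(m,n))-isosymmetric, then for every real s, Σ_{k=0}^n (-1)^{n−k} binom(n,k) (e^{isT})*^k I_A^m(T) (e^{isT})^k = 0; in particular, if I_A^m(T) ≥ 0 then e^{isT} is an (I_A^m(T), n)-isometry. -/

import Mathlib

/-!
Let `Δ = L_{T*} - R_T` and `Γ = L_{T*} R_T - 1`, built from left and right multiplication on
`B(H)`. They commute, and `S_A^n(T) = Δⁿ A`, `I_A^m(T) = Γᵐ A`, `Ω_A^{m,n}(T) = Γᵐ Δⁿ A`, so
`Δⁿ I_A^m(T) = Ω_A^{m,n}(T) = 0`. For `U = e^{isT}` we have `L_{U*} R_U = exp D` with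
`D = L_{-isT*} + R_{isT} = -is Δ`. Hence `Dⁿ` kills `I_A^m(T)`, and the Taylor expansion of
`(exp D)ᵏ I_A^m(T) = exp (k D) I_A^m(T)` is a polynomial of degree `< n` in `k`. Its `n`-th
finite difference, which is the alternating sum of the theorem, therefore vanishes.
-/

open ContinuousLinearMap

noncomputable def SOp {H : Type*} [NormedAddCommGroup H] [InnerProductSpace ℂ H]
    [CompleteSpace H] (A T : H →L[ℂ] H) (n : ℕ) : H →L[ℂ] H :=
  ∑ k ∈ Finset.range (n + 1),
    ((-1 : ℂ) ^ (n - k) * (n.choose k : ℂ)) • (((adjoint T) ^ k) ∘L A ∘L (T ^ (n - k)))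

noncomputable def OmegaS {H : Type*} [NormedAddCommGroup H] [InnerProductSpace ℂ H]
    [CompleteSpace H] (A T : H →L[ℂ] H) (m n : ℕ) : H →L[ℂ] H :=
  ∑ k ∈ Finset.range (m + 1),
    ((-1 : ℂ) ^ (m - k) * (m.choose k : ℂ)) • (((adjoint T) ^ k) ∘L SOp A T n ∘L (T ^ k))

noncomputable def IOp {H : Type*} [NormedAddCommGroup H] [InnerProductSpace ℂ H]
    [CompleteSpace H] (A T : H →L[ℂ] H) (m : ℕ) : H →L[ℂ] H :=
  ∑ j ∈ Finset.range (m + 1),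
    ((-1 : ℂ) ^ (m - j) * (m.choose j : ℂ)) • (((adjoint T) ^ j) ∘L A ∘L (T ^ j))

/-- `U` is a `(B,n)`-isometry. -/
def IsBnIsometry {H : Type*} [NormedAddCommGroup H] [InnerProductSpace ℂ H]
    [CompleteSpace H] (B U : H →L[ℂ] H) (n : ℕ) : Prop :=
  ∑ k ∈ Finset.range (n + 1),
    ((-1 : ℂ) ^ (n - k) * (n.choose k : ℂ)) • (((adjoint U) ^ k) ∘L B ∘L (U ^ k)) = 0

open NormedSpace Finset MulOpposite
open scoped Nat

theorem Commute.sub_pow_eq_sum_smul {𝕜 R : Type*} [CommRing 𝕜] [Ring R] [Algebra 𝕜 R] {x y : R}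
    (h : Commute x y) (n : ℕ) :
    (x - y) ^ n =
      ∑ k ∈ range (n + 1), ((-1 : 𝕜) ^ (n - k) * n.choose k) • (x ^ k * y ^ (n - k)) := by
  rw [sub_eq_add_neg, h.neg_right.add_pow]
  refine sum_congr rfl fun k _ => ?_
  rw [← neg_one_smul 𝕜 y, smul_pow, ← Nat.cast_comm, ← nsmul_eq_mul, ← Nat.cast_smul_eq_nsmul 𝕜]
  simp only [mul_smul_comm, smul_smul, mul_comm]

theorem sum_range_neg_one_pow_mul_choose_mul_pow_eq_zero {R : Type*} [CommRing R] {j n : ℕ}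
    (h : j < n) : ∑ k ∈ range (n + 1), (-1 : R) ^ (n - k) * n.choose k * (k : R) ^ j = 0 := by
  have := fwdDiff_iter_eq_sum_shift (1 : R) (· ^ j) n 0
  rw [fwdDiff_iter_pow_eq_zero_of_lt h] at this
  simpa [zsmul_eq_mul] using this.symm

section KernelOfPower

variable {E : Type*} [NormedAddCommGroup E] [NormedSpace ℂ E] [CompleteSpace E]
  {D : E →L[ℂ] E} {x : E} {n : ℕ}

theorem exp_pow_apply_eq_sum_of_pow_apply_eq_zero (hx : (D ^ n) x = 0) (k : ℕ) :
    (exp D ^ k) x = ∑ j ∈ range n, ((k : ℂ) ^ j / j !) • (D ^ j) x := by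
  -- `exp_nsmul` is stated for `ℚ`-algebras; restrict the scalars to get one.
  let : NormedAlgebra ℚ (E →L[ℂ] E) := .restrictScalars ℚ ℂ _
  have hvanish : ∀ j ∉ range n, ((k : ℂ) ^ j / j !) • (D ^ j) x = 0 := fun j hj => by
    obtain ⟨i, rfl⟩ := Nat.exists_eq_add_of_le' (not_lt.1 (mem_range.not.1 hj))
    rw [pow_add D, mul_apply_eq_comp, hx, map_zero, smul_zero]
  calc (exp D ^ k) x = ∑' j, ((j ! : ℂ)⁻¹ • (k • D) ^ j) x := by
        rw [← exp_nsmul, exp_eq_tsum ℂ]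
        exact (apply ℂ E x).map_tsum (expSeries_summable' _)
    _ = ∑' j, ((k : ℂ) ^ j / j !) • (D ^ j) x := tsum_congr fun j => by
        rw [smul_pow, ← Nat.cast_smul_eq_nsmul ℂ, smul_apply, smul_apply, smul_smul]
        push_cast; rw [div_eq_inv_mul]
    _ = _ := tsum_eq_sum hvanish

theorem exp_sub_one_pow_apply_eq_zero (hx : (D ^ n) x = 0) : ((exp D - 1) ^ n) x = 0 := by
  rw [(Commute.one_right _).sub_pow_eq_sum_smul (𝕜 := ℂ), _root_.sum_apply]
  simp only [one_pow, mul_one, smul_apply, exp_pow_apply_eq_sum_of_pow_apply_eq_zero hx,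
    smul_sum, smul_smul]
  rw [sum_comm]
  refine sum_eq_zero fun j hj => ?_
  rw [← sum_smul]
  simp only [← mul_div_assoc, ← sum_div,
    sum_range_neg_one_pow_mul_choose_mul_pow_eq_zero (mem_range.1 hj), zero_div, zero_smul]

end KernelOfPower

section MultiplicationOperators

variable {𝔸 : Type*} [NormedRing 𝔸] [NormedAlgebra ℂ 𝔸]

noncomputable def mulLeftHom : 𝔸 →+* (𝔸 →L[ℂ] 𝔸) where
  toFun := mul ℂ 𝔸
  map_one' := by ext; simp
  map_mul' a b := by ext; simp [mul_assoc]
  map_zero' := map_zero _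
  map_add' := map_add _

noncomputable def mulRightHom : 𝔸ᵐᵒᵖ →+* (𝔸 →L[ℂ] 𝔸) where
  toFun b := (mul ℂ 𝔸).flip b.unop
  map_one' := by ext; simp
  map_mul' a b := by ext; simp [mul_assoc]
  map_zero' := by ext; simp
  map_add' a b := by ext; simp

@[simp] lemma mulLeftHom_apply (a X : 𝔸) : mulLeftHom a X = a * X := rfl

@[simp] lemma mulRightHom_apply (b : 𝔸ᵐᵒᵖ) (X : 𝔸) : mulRightHom b X = X * b.unop := rfl

lemma mulLeftHom_smul (c : ℂ) (a : 𝔸) : mulLeftHom (c • a) = c • mulLeftHom a :=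
  map_smul (mul ℂ 𝔸) c a

lemma mulRightHom_op_smul (c : ℂ) (b : 𝔸) :
    mulRightHom (op (c • b)) = c • mulRightHom (op b) :=
  map_smul (mul ℂ 𝔸).flip c b

lemma commute_mulLeftHom_mulRightHom (a : 𝔸) (b : 𝔸ᵐᵒᵖ) :
    Commute (mulLeftHom a) (mulRightHom b) :=
  ContinuousLinearMap.ext fun X => (mul_assoc a X b.unop).symm

lemma mulLeftHom_pow_mul_mulRightHom_pow_apply (a b X : 𝔸) (i j : ℕ) :
    (mulLeftHom a ^ i * mulRightHom (op b) ^ j) X = a ^ i * X * b ^ j := by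
  rw [← map_pow, ← map_pow, ← op_pow, mul_apply_eq_comp, mulRightHom_apply, mulLeftHom_apply,
    unop_op, mul_assoc]

theorem mulLeftHom_sub_mulRightHom_pow_apply (a b X : 𝔸) (n : ℕ) :
    ((mulLeftHom a - mulRightHom (op b)) ^ n) X =
      ∑ k ∈ range (n + 1), ((-1 : ℂ) ^ (n - k) * n.choose k) • (a ^ k * X * b ^ (n - k)) := by
  rw [(commute_mulLeftHom_mulRightHom a (op b)).sub_pow_eq_sum_smul (𝕜 := ℂ), _root_.sum_apply]
  simp only [smul_apply, mulLeftHom_pow_mul_mulRightHom_pow_apply]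

theorem mulLeftHom_mul_mulRightHom_sub_one_pow_apply (a b X : 𝔸) (n : ℕ) :
    ((mulLeftHom a * mulRightHom (op b) - 1) ^ n) X =
      ∑ k ∈ range (n + 1), ((-1 : ℂ) ^ (n - k) * n.choose k) • (a ^ k * X * b ^ k) := by
  rw [(Commute.one_right _).sub_pow_eq_sum_smul (𝕜 := ℂ), _root_.sum_apply]
  simp only [one_pow, mul_one, smul_apply,
    (commute_mulLeftHom_mulRightHom a (op b)).mul_pow, mulLeftHom_pow_mul_mulRightHom_pow_apply]

theorem exp_mulLeftHom_add_mulRightHom [CompleteSpace 𝔸] (a b : 𝔸) :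
    exp (mulLeftHom a + mulRightHom (op b)) = mulLeftHom (exp a) * mulRightHom (op (exp b)) := by
  let : NormedAlgebra ℚ 𝔸 := .restrictScalars ℚ ℂ 𝔸
  let : NormedAlgebra ℚ (𝔸 →L[ℂ] 𝔸) := .restrictScalars ℚ ℂ _
  rw [exp_add_of_commute (commute_mulLeftHom_mulRightHom a (op b)),
    map_exp mulLeftHom (mul ℂ 𝔸).continuous, ← exp_op,
    map_exp mulRightHom ((mul ℂ 𝔸).flip.continuous.comp continuous_unop)]

end MultiplicationOperators

section StarAlgebra

variable {𝔸 : Type*} [NormedRing 𝔸] [NormedAlgebra ℂ 𝔸] [StarRing 𝔸]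

noncomputable def symmetricDefect (T : 𝔸) : 𝔸 →L[ℂ] 𝔸 :=
  mulLeftHom (star T) - mulRightHom (op T)

noncomputable def isometricDefect (T : 𝔸) : 𝔸 →L[ℂ] 𝔸 :=
  mulLeftHom (star T) * mulRightHom (op T) - 1

lemma commute_symmetricDefect_isometricDefect (T : 𝔸) :
    Commute (symmetricDefect T) (isometricDefect T) := by
  have hLR := commute_mulLeftHom_mulRightHom (star T) (op T)
  refine (Commute.sub_left ?_ ?_).sub_right (Commute.one_right _)
  · exact (Commute.refl _).mul_right hLR
  · exact hLR.symm.mul_right (Commute.refl _)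

theorem isometricDefect_exp_pow_apply_eq_zero [StarModule ℂ 𝔸] [ContinuousStar 𝔸]
    [CompleteSpace 𝔸] {T X : 𝔸} {n : ℕ} (hX : (symmetricDefect T ^ n) X = 0) (s : ℝ) :
    (isometricDefect (exp ((Complex.I * s) • T)) ^ n) X = 0 := by
  set c : ℂ := Complex.I * s
  have hc : star c = -c := by simp [c]
  have hD : mulLeftHom (star (c • T)) + mulRightHom (op (c • T)) = (-c) • symmetricDefect T := by
    rw [star_smul, hc, mulLeftHom_smul, mulRightHom_op_smul, symmetricDefect]
    module
  rw [isometricDefect, star_exp, ← exp_mulLeftHom_add_mulRightHom]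
  refine exp_sub_one_pow_apply_eq_zero ?_
  rw [hD, smul_pow, smul_apply, hX, smul_zero]

end StarAlgebra

section Isosymmetric

variable {H : Type*} [NormedAddCommGroup H] [InnerProductSpace ℂ H] [CompleteSpace H]

lemma IOp_eq_isometricDefect_pow_apply (A T : H →L[ℂ] H) (m : ℕ) :
    IOp A T m = (isometricDefect T ^ m) A := by
  rw [IOp, isometricDefect, mulLeftHom_mul_mulRightHom_sub_one_pow_apply]
  simp only [star_eq_adjoint, ContinuousLinearMap.mul_def, comp_assoc]

lemma SOp_eq_symmetricDefect_pow_apply (A T : H →L[ℂ] H) (n : ℕ) :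
    SOp A T n = (symmetricDefect T ^ n) A := by
  rw [SOp, symmetricDefect, mulLeftHom_sub_mulRightHom_pow_apply]
  simp only [star_eq_adjoint, ContinuousLinearMap.mul_def, comp_assoc]

lemma OmegaS_eq_isometricDefect_pow_apply (A T : H →L[ℂ] H) (m n : ℕ) :
    OmegaS A T m n = (isometricDefect T ^ m) (SOp A T n) := by
  rw [OmegaS, isometricDefect, mulLeftHom_mul_mulRightHom_sub_one_pow_apply]
  simp only [star_eq_adjoint, ContinuousLinearMap.mul_def, comp_assoc]

lemma symmetricDefect_pow_apply_IOp (A T : H →L[ℂ] H) (m n : ℕ) :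
    (symmetricDefect T ^ n) (IOp A T m) = OmegaS A T m n := by
  rw [IOp_eq_isometricDefect_pow_apply, OmegaS_eq_isometricDefect_pow_apply,
    SOp_eq_symmetricDefect_pow_apply, ← mul_apply_eq_comp, ← mul_apply_eq_comp,
    ((commute_symmetricDefect_isometricDefect T).pow_pow n m).eq]

end Isosymmetric

theorem exp_is_isometry_of_isosymmetric_general {H : Type*} [NormedAddCommGroup H]
    [InnerProductSpace ℂ H] [CompleteSpace H] (A T : H →L[ℂ] H)
    (m n : ℕ) (h : OmegaS A T m n = 0) :
    (∀ s : ℝ,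
        ∑ k ∈ Finset.range (n + 1),
          ((-1 : ℂ) ^ (n - k) * (n.choose k : ℂ)) •
            (((adjoint (NormedSpace.exp ((Complex.I * (s : ℂ)) • T))) ^ k) ∘L IOp A T m ∘L
              ((NormedSpace.exp ((Complex.I * (s : ℂ)) • T)) ^ k)) = 0) ∧
      ((IOp A T m).IsPositive →
        ∀ s : ℝ, IsBnIsometry (IOp A T m) (NormedSpace.exp ((Complex.I * (s : ℂ)) • T)) n) := by
  have key (s : ℝ) : IOp (IOp A T m) (exp ((Complex.I * s) • T)) n = 0 := by
    rw [IOp_eq_isometricDefect_pow_apply]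
    exact isometricDefect_exp_pow_apply_eq_zero (by rw [symmetricDefect_pow_apply_IOp, h]) s
  exact ⟨key, fun _ => key⟩

theorem exp_is_isometry_of_isosymmetric {H : Type*} [NormedAddCommGroup H]
    [InnerProductSpace ℂ H] [CompleteSpace H] (A T : H →L[ℂ] H) (hA : A.IsPositive)
    (m n : ℕ) (h : OmegaS A T m n = 0) :
    (∀ s : ℝ,
        ∑ k ∈ Finset.range (n + 1),
          ((-1 : ℂ) ^ (n - k) * (n.choose k : ℂ)) •
            (((adjoint (NormedSpace.exp ((Complex.I * (s : ℂ)) • T))) ^ k) ∘L IOp A T m ∘L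
              ((NormedSpace.exp ((Complex.I * (s : ℂ)) • T)) ^ k)) = 0) ∧
      ((IOp A T m).IsPositive →
        ∀ s : ℝ, IsBnIsometry (IOp A T m) (NormedSpace.exp ((Complex.I * (s : ℂ)) • T)) n) :=
  exp_is_isometry_of_isosymmetric_general A T m n h
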